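/- arXiv:1511.04035 — 5 statements merged into one kernel-verified Lean document; each statement's English description precedes it below -/
import Mathlib

section
/- Let L and M be integers with 1 ≤ L < M and let A = {L, L+1, …, M}. Then for every n ∈ ℕ, W_A(n) = II if and only if n mod (L+M) ∈ {0, 1, 2, …, L−1}. -/
/-!
From a position whose residue `r` modulo `L + M` is below `L`, every move `a ∈ [L, M]` lands on the
residue `r + L + M - a ∈ [L, L + M)`; from a residue `r ≥ L`, the move `max L (r + 1 - L)` lands on a
residue below `L`. A set of positions with these two properties is, by strong induction, the set of
losing positions.
-/

/-- Standard NIM winner for the one-pile subtraction game with move set `A`: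
`nimW A n = true` means Player I (the player to move) wins with `n` stones;
`nimW A n = false` means Player II wins.  (For `A` consisting of positive
integers this is exactly: Player I wins iff some `a ∈ A` with `a ≤ n` moves to
a Player-II-win position `n - a`.) -/
def nimW (A : Finset ℕ) : ℕ → Bool
  | n =>
    decide (((A.filter fun a => 0 < a ∧ a ≤ n).attach.filter (fun a =>
      nimW A (n - a.1) = false)).Nonempty)
decreasing_by
  all_goals
    have h := a.2
    simp only [Finset.mem_filter] at h
    omega

lemma nimW_eq_true_iff (A : Finset ℕ) (n : ℕ) :
    nimW A n = true ↔ ∃ a ∈ A, 0 < a ∧ a ≤ n ∧ nimW A (n - a) = false := by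
  rw [nimW, decide_eq_true_iff]
  simp only [Finset.Nonempty, Finset.mem_filter, Finset.mem_attach, true_and, Subtype.exists]
  tauto

theorem nimW_eq_false_iff_of_forall {A : Finset ℕ} {P : ℕ → Prop}
    (hstable : ∀ n, P n → ∀ a ∈ A, 0 < a → a ≤ n → ¬ P (n - a))
    (habsorb : ∀ n, ¬ P n → ∃ a ∈ A, 0 < a ∧ a ≤ n ∧ P (n - a)) (n : ℕ) :
    nimW A n = false ↔ P n := by
  induction n using Nat.strong_induction_on with
  | _ n ih =>
    rw [← Bool.not_eq_true, nimW_eq_true_iff, not_iff_comm]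
    constructor
    · intro hn
      obtain ⟨a, ha, hpos, han, hP⟩ := habsorb n hn
      exact ⟨a, ha, hpos, han, (ih (n - a) (by omega)).2 hP⟩
    · rintro ⟨a, ha, hpos, han, hlose⟩ hn
      exact hstable n hn a ha hpos han ((ih (n - a) (by omega)).1 hlose)

theorem Nat.sub_mod_eq_of_modEq {n a m d : ℕ} (han : a ≤ n) (hm : m < d)
    (h : m + a ≡ n [MOD d]) : (n - a) % d = m := by
  have : n - a ≡ m [MOD d] := Nat.ModEq.add_right_cancel' a (by rwa [Nat.sub_add_cancel han, Nat.ModEq.comm])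
  rw [this, Nat.mod_eq_of_lt hm]

section Interval

variable {L M : ℕ}

theorem le_sub_mod_of_mod_lt {n a : ℕ} (hn : n % (L + M) < L) (ha : a ∈ Finset.Icc L M)
    (han : a ≤ n) : L ≤ (n - a) % (L + M) := by
  rw [Finset.mem_Icc] at ha
  have hmod : n % (L + M) + (L + M) - a + a ≡ n [MOD L + M] := by
    rw [Nat.sub_add_cancel (by omega)]
    exact (Nat.add_modulus_modEq_iff).2 (Nat.mod_modEq n _)
  rw [Nat.sub_mod_eq_of_modEq han (by omega) hmod]
  omega

theorem exists_sub_mod_lt (hL : 1 ≤ L) (hLM : L ≤ M) {n : ℕ} (hn : L ≤ n % (L + M)) :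
    ∃ a ∈ Finset.Icc L M, 0 < a ∧ a ≤ n ∧ (n - a) % (L + M) < L := by
  have hlt : n % (L + M) < L + M := Nat.mod_lt _ (by omega)
  have hle : n % (L + M) ≤ n := Nat.mod_le _ _
  have hmodEq : n % (L + M) ≡ n [MOD L + M] := Nat.mod_modEq n _
  generalize n % (L + M) = r at *
  obtain ⟨a, hLa, haM, har, hra⟩ : ∃ a, L ≤ a ∧ a ≤ M ∧ a ≤ r ∧ r - a < L := by
    rcases le_or_gt (r + 1) (2 * L) with h | h
    exacts [⟨L, by omega⟩, ⟨r + 1 - L, by omega⟩]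
  refine ⟨a, Finset.mem_Icc.2 ⟨hLa, haM⟩, by omega, by omega, ?_⟩
  rwa [Nat.sub_mod_eq_of_modEq (m := r - a) (by omega) (by omega)
    (by rwa [Nat.sub_add_cancel har])]

end Interval

/-- For `1 ≤ L < M` and `A = {L, L+1, …, M}`,
Player II wins standard NIM with `n` stones iff `n mod (L+M) ∈ {0, 1, …, L-1}`. -/
theorem nim_Icc_winCondition (L M : ℕ) (hL : 1 ≤ L) (hLM : L < M) (n : ℕ) :
    nimW (Finset.Icc L M) n = false ↔ n % (L + M) < L :=
  nimW_eq_false_iff_of_forall (P := fun n => n % (L + M) < L)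
    (fun _ hn _ ha _ han => not_lt.2 (le_sub_mod_of_mod_lt hn ha han))
    (fun _ hn => exists_sub_mod_lt hL hLM.le (not_lt.1 hn)) n
end

section
/- Let A be a finite nonempty set of positive integers with a1 = min A. For every n ∈ ℕ and every a ∈ A with a ≤ n: gI(n) ≤ gII(n−a) + a. (Equivalently, if d < gI(n) then d − a < gII(n−a).) -/
/-- `gI a1 n = (n - i)/2 + min (i+1) a1` where `i = n mod 2*a1`:
the poorness threshold for the player to move. -/
def gI (a1 n : ℕ) : ℕ := (n - n % (2 * a1)) / 2 + min (n % (2 * a1) + 1) a1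

/-- `gII a1 n = (n - i)/2 + max 0 (i - a1 + 1)` where `i = n mod 2*a1`
(the `max` with `0` is realized by truncated subtraction `(i + 1) - a1`):
the poorness threshold for the player not moving. -/
def gII (a1 n : ℕ) : ℕ := (n - n % (2 * a1)) / 2 + (n % (2 * a1) + 1 - a1)

lemma gI_key (a1 a i j Q1 Q2 k : ℕ) (ha1 : 0 < a1) (ha : a1 ≤ a)
    (hi : i < 2 * a1) (hj : j < 2 * a1)
    (heq : 2 * Q1 + i = 2 * Q2 + j + a) (hk : Q1 = Q2 + a1 * k) :
    Q1 + min (i + 1) a1 ≤ Q2 + (j + 1 - a1) + a := by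
  rcases k with _ | k
  · simp at hk
    omega
  · have hQ : a1 ≤ a1 * (k + 1) := Nat.le_mul_of_pos_right a1 k.succ_pos
    omega

/-- With `a1 = min A`: for every `a ∈ A` with `a ≤ n`,
`gI n ≤ gII (n - a) + a` (equivalently, if `d < gI n` then `d - a < gII (n - a)`). -/
theorem gI_le_gII_sub_add (A : Finset ℕ) (hA : A.Nonempty) (hpos : ∀ a ∈ A, 0 < a)
    (a1 : ℕ) (ha1 : a1 = A.min' hA) (n : ℕ) (a : ℕ) (haA : a ∈ A) (han : a ≤ n) :
    gI a1 n ≤ gII a1 (n - a) + a := by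
  have ha1pos : 0 < a1 := ha1 ▸ hpos _ (A.min'_mem hA)
  have ha1a : a1 ≤ a := ha1 ▸ A.min'_le a haA
  unfold gI gII
  have htpos : 0 < 2 * a1 := by omega
  set m := n - a with hm
  have hdm1 : 2 * a1 * (n / (2 * a1)) + n % (2 * a1) = n := Nat.div_add_mod n (2 * a1)
  have hdm2 : 2 * a1 * (m / (2 * a1)) + m % (2 * a1) = m := Nat.div_add_mod m (2 * a1)
  have hi : n % (2 * a1) < 2 * a1 := Nat.mod_lt n htpos
  have hj : m % (2 * a1) < 2 * a1 := Nat.mod_lt m htpos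
  have e1 : (n - n % (2 * a1)) / 2 = a1 * (n / (2 * a1)) := by
    have h : n - n % (2 * a1) = 2 * (a1 * (n / (2 * a1))) := by
      rw [← mul_assoc]; omega
    rw [h, Nat.mul_div_cancel_left _ two_pos]
  have e2 : (m - m % (2 * a1)) / 2 = a1 * (m / (2 * a1)) := by
    have h : m - m % (2 * a1) = 2 * (a1 * (m / (2 * a1))) := by
      rw [← mul_assoc]; omega
    rw [h, Nat.mul_div_cancel_left _ two_pos]
  rw [e1, e2]
  -- get q2 ≤ q1 and the difference
  have hle : m / (2 * a1) ≤ n / (2 * a1) :=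
    Nat.div_le_div_right (by omega)
  obtain ⟨k, hk⟩ := Nat.le.dest hle
  have hQ : a1 * (n / (2 * a1)) = a1 * (m / (2 * a1)) + a1 * k := by
    rw [← hk]; ring
  have heq : 2 * (a1 * (n / (2 * a1))) + n % (2 * a1)
      = 2 * (a1 * (m / (2 * a1))) + m % (2 * a1) + a := by
    have h1 : 2 * (a1 * (n / (2 * a1))) = 2 * a1 * (n / (2 * a1)) := by ring
    have h2 : 2 * (a1 * (m / (2 * a1))) = 2 * a1 * (m / (2 * a1)) := by ring
    rw [h1, h2]; omega
  exact gI_key a1 a (n % (2 * a1)) (m % (2 * a1)) _ _ k ha1pos ha1a hi hj heq (by omega)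
end

section
/- Let A be a finite nonempty set of positive integers with a1 = min A. For all n, d, e ∈ ℕ: if e < gII(n) and ⌊d/a1⌋ > ⌊e/a1⌋, then W_A^$(n;d,e) = I. -/
/-- NIM-with-cash winner: `nimWC A n d e = true` means the player to move,
having `d` dollars while the opponent has `e` dollars, wins with `n` stones
on the board.  The player to move wins iff there is `a ∈ A` with `a ≤ n`
and `a ≤ d` such that the resulting position `(n - a; e, d - a)` is a loss
for the (new) player to move. -/
def nimWC (A : Finset ℕ) : ℕ → ℕ → ℕ → Bool
  | n, d, e =>
    decide (((A.filter fun a => 0 < a ∧ a ≤ n ∧ a ≤ d).attach.filter (fun a =>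
      nimWC A (n - a.1) e (d - a.1) = false)).Nonempty)
decreasing_by
  all_goals
    have h := a.2
    simp only [Finset.mem_filter] at h
    omega

section Helpers

lemma nimWC_true_iff (A : Finset ℕ) (n d e : ℕ) :
    nimWC A n d e = true ↔
      ∃ a ∈ A, (0 < a ∧ a ≤ n ∧ a ≤ d) ∧ nimWC A (n - a) e (d - a) = false := by
  rw [nimWC]
  simp [Finset.filter_nonempty_iff, Finset.mem_filter]
  tauto

lemma nimWC_false_iff (A : Finset ℕ) (n d e : ℕ) :
    nimWC A n d e = false ↔
      ∀ a ∈ A, 0 < a → a ≤ n → a ≤ d → nimWC A (n - a) e (d - a) = true := by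
  rw [← Bool.not_eq_true, nimWC_true_iff]
  push_neg
  simp only [Bool.not_eq_false]
  constructor
  · intro h a ha h1 h2 h3
    exact h a ha ⟨h1, h2, h3⟩
  · rintro h a ha ⟨h1, h2, h3⟩
    exact h a ha h1 h2 h3

lemma gII_decomp (a1 n : ℕ) (ha : 0 < a1) :
    ∃ q i, i < 2 * a1 ∧ n = 2 * a1 * q + i :=
  ⟨n / (2 * a1), n % (2 * a1), Nat.mod_lt _ (by omega), (Nat.div_add_mod n (2 * a1)).symm⟩

lemma gII_eq (a1 : ℕ) (q i : ℕ) (hi : i < 2 * a1) :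
    gII a1 (2 * a1 * q + i) = a1 * q + (i + 1 - a1) := by
  unfold gII
  rw [Nat.mul_add_mod, Nat.mod_eq_of_lt hi, Nat.add_sub_cancel,
    Nat.mul_assoc, Nat.mul_div_cancel_left _ two_pos]

lemma gII_add_period (a1 m : ℕ) (ha : 0 < a1) : gII a1 (m + 2 * a1) = gII a1 m + a1 := by
  obtain ⟨q, i, hi, rfl⟩ := gII_decomp a1 m ha
  have h1 : 2 * a1 * q + i + 2 * a1 = 2 * a1 * (q + 1) + i := by ring
  rw [h1, gII_eq a1 (q+1) i hi, gII_eq a1 q i hi, Nat.mul_add, Nat.mul_one]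
  omega

lemma gII_succ_le (a1 m : ℕ) (ha : 0 < a1) : gII a1 (m + 1) ≤ gII a1 m + 1 := by
  obtain ⟨q, i, hi, rfl⟩ := gII_decomp a1 m ha
  rcases Nat.lt_or_ge (i + 1) (2 * a1) with h | h
  · have h1 : 2 * a1 * q + i + 1 = 2 * a1 * q + (i + 1) := by ring
    rw [h1, gII_eq a1 q (i+1) h, gII_eq a1 q i hi]
    omega
  · have hi1 : i = 2 * a1 - 1 := by omega
    have h1 : 2 * a1 * q + i + 1 = 2 * a1 * (q + 1) + 0 := by subst hi1; ring_nf; omega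
    rw [h1, gII_eq a1 (q+1) 0 (by omega), gII_eq a1 q i hi, Nat.mul_add, Nat.mul_one]
    omega

lemma gII_add_le (a1 m : ℕ) (ha : 0 < a1) : ∀ r, gII a1 (m + r) ≤ gII a1 m + r := by
  intro r
  induction r with
  | zero => simp
  | succ k ihk =>
    have h2 : m + (k + 1) = (m + k) + 1 := by omega
    rw [h2]
    have := gII_succ_le a1 (m + k) ha
    omega

lemma gII_le_of_big (a1 m k : ℕ) (ha : 0 < a1) (hk : 2 * a1 ≤ k) :
    gII a1 (m + k) ≤ gII a1 m + (k - a1) := by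
  have h1 : m + k = (m + (k - 2 * a1)) + 2 * a1 := by omega
  rw [h1, gII_add_period a1 _ ha]
  have := gII_add_le a1 m ha (k - 2 * a1)
  omega

lemma a1_le_of_gII_pos (a1 n : ℕ) (ha : 0 < a1) (h : 0 < gII a1 n) : a1 ≤ n := by
  obtain ⟨q, i, hi, rfl⟩ := gII_decomp a1 n ha
  rw [gII_eq a1 q i hi] at h
  rcases Nat.eq_zero_or_pos q with rfl | hq
  · simp at h ⊢; omega
  · have : 2 * a1 * 1 ≤ 2 * a1 * q := Nat.mul_le_mul_left _ hq
    omega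

end Helpers

/-- With `a1 = min A`: if `e < gII n` and `⌊d/a1⌋ > ⌊e/a1⌋`,
the player to move wins NIM with cash. -/
theorem nimWC_poor_I (A : Finset ℕ) (hA : A.Nonempty) (hpos : ∀ a ∈ A, 0 < a)
    (a1 : ℕ) (ha1 : a1 = A.min' hA) (n d e : ℕ)
    (he : e < gII a1 n) (hde : e / a1 < d / a1) :
    nimWC A n d e = true := by
  have ha1mem : a1 ∈ A := ha1 ▸ A.min'_mem hA
  have ha1le : ∀ a ∈ A, a1 ≤ a := fun a h => ha1 ▸ A.min'_le a h
  have ha1pos : 0 < a1 := hpos a1 ha1mem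
  clear ha1
  induction n using Nat.strong_induction_on generalizing d e with
  | _ n IH =>
  have ha1n : a1 ≤ n := a1_le_of_gII_pos a1 n ha1pos (by omega)
  have ha1d : a1 ≤ d := by
    by_contra hcon
    push_neg at hcon
    have h0 : d / a1 = 0 := Nat.div_eq_of_lt hcon
    rw [h0] at hde
    exact Nat.not_lt_zero _ hde
  rw [nimWC_true_iff]
  refine ⟨a1, ha1mem, ⟨ha1pos, ha1n, ha1d⟩, ?_⟩
  rw [nimWC_false_iff]
  intro a haA hapos han hae
  have ha1a : a1 ≤ a := ha1le a haA
  -- set up quantities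
  have hm : (n - a1) - a = n - (a1 + a) := by omega
  rw [hm]
  -- stones condition for IH
  have hsum : (n - (a1 + a)) + (a1 + a) = n := by omega
  have hbig := gII_le_of_big a1 (n - (a1 + a)) (a1 + a) ha1pos (by omega)
  rw [hsum] at hbig
  -- money condition
  have hd1 : d / a1 = (d - a1) / a1 + 1 := by
    have h1 := Nat.add_div_right (d - a1) ha1pos
    rw [show d - a1 + a1 = d by omega] at h1
    exact h1
  have he1 : (e - a) / a1 + 1 ≤ e / a1 := by
    have h1 : (e - a) / a1 + 1 = ((e - a) + a1) / a1 := (Nat.add_div_right _ ha1pos).symm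
    rw [h1]
    exact Nat.div_le_div_right (by omega)
  exact IH (n - (a1 + a)) (by omega) (d - a1) (e - a) (by omega) (by omega)
end

section
/- Let A be a finite nonempty set of positive integers with a1 = min A. For all n, d, e ∈ ℕ: if d < gI(n) and ⌊d/a1⌋ ≤ ⌊e/a1⌋, then W_A^$(n;d,e) = II. -/
lemma nimWC_true_of (A : Finset ℕ) (n d e a : ℕ) (haA : a ∈ A) (h0 : 0 < a) (hn : a ≤ n)
    (hd : a ≤ d) (hw : nimWC A (n - a) e (d - a) = false) : nimWC A n d e = true := by
  by_contra hcon
  have := (nimWC_false_iff A n d e).mp (by revert hcon; cases nimWC A n d e <;> simp)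
  have := this a haA h0 hn hd
  rw [hw] at this
  exact absurd this (by simp)

lemma gI_closed (a1 n : ℕ) : gI a1 n = a1 * (n / (2 * a1)) + min (n % (2 * a1) + 1) a1 := by
  unfold gI
  congr 1
  have h := Nat.div_add_mod n (2 * a1)
  have h2 : n - n % (2 * a1) = 2 * (a1 * (n / (2 * a1))) := by
    rw [← mul_assoc]; omega
  rw [h2, Nat.mul_div_cancel_left _ (by norm_num : 0 < 2)]

lemma gI_succ_le (a1 n : ℕ) (h : 0 < a1) : gI a1 (n + 1) ≤ gI a1 n + 1 := by
  have ht : 0 < 2 * a1 := by omega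
  have hmod : (n + 1) % (2 * a1) = (n % (2 * a1) + 1) % (2 * a1) := by
    conv_lhs => rw [Nat.add_mod]
    rw [Nat.mod_eq_of_lt (show 1 < 2 * a1 by omega)]
  rcases eq_or_lt_of_le (show n % (2*a1) + 1 ≤ 2*a1 from Nat.mod_lt n ht) with hc | hc
  · have hm0 : (n + 1) % (2 * a1) = 0 := by rw [hmod, hc, Nat.mod_self]
    have hdiv : (n + 1) / (2 * a1) = n / (2 * a1) + 1 := by
      have h1 := Nat.div_add_mod n (2 * a1)
      have h2 := Nat.div_add_mod (n + 1) (2 * a1)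
      rw [hm0] at h2
      have : 2 * a1 * ((n+1)/(2*a1)) = 2 * a1 * (n/(2*a1) + 1) := by
        rw [Nat.mul_add]; omega
      exact Nat.eq_of_mul_eq_mul_left ht this
    rw [gI_closed, gI_closed, hm0, hdiv, hc, Nat.mul_add]
    omega
  · have hm : (n + 1) % (2 * a1) = n % (2 * a1) + 1 := by
      rw [hmod, Nat.mod_eq_of_lt hc]
    have hdiv : (n + 1) / (2 * a1) = n / (2 * a1) := by
      have h1 := Nat.div_add_mod n (2 * a1)
      have h2 := Nat.div_add_mod (n + 1) (2 * a1)
      rw [hm] at h2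
      have : 2 * a1 * ((n+1)/(2*a1)) = 2 * a1 * (n/(2*a1)) := by omega
      exact Nat.eq_of_mul_eq_mul_left ht this
    rw [gI_closed, gI_closed, hm, hdiv]
    omega

lemma gI_add_le (a1 n s : ℕ) (h : 0 < a1) : gI a1 (n + s) ≤ gI a1 n + s := by
  induction s with
  | zero => simp
  | succ k ih =>
    calc gI a1 (n + k + 1) ≤ gI a1 (n + k) + 1 := gI_succ_le a1 (n + k) h
    _ ≤ gI a1 n + (k + 1) := by omega

lemma gI_period (a1 n : ℕ) (h : 0 < a1) : gI a1 (n + 2 * a1) = gI a1 n + a1 := by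
  have ht : 0 < 2 * a1 := by omega
  rw [gI_closed, gI_closed, Nat.add_mod_right, Nat.add_div_right _ ht, Nat.mul_add]
  omega

lemma gI_key_s11 (a1 m a : ℕ) (h : 0 < a1) (ha : a1 ≤ a) : gI a1 (m + a + a1) ≤ gI a1 m + a := by
  have he : m + a + a1 = (m + 2 * a1) + (a - a1) := by omega
  rw [he]
  calc gI a1 ((m + 2*a1) + (a - a1)) ≤ gI a1 (m + 2*a1) + (a - a1) := gI_add_le _ _ _ h
  _ = gI a1 m + a1 + (a - a1) := by rw [gI_period _ _ h]
  _ ≤ gI a1 m + a := by omega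

lemma move_room_arith (a1 a d q i : ℕ) (hd : d < a1 * q + min (i + 1) a1) (ha : a1 ≤ a)
    (han : a ≤ 2 * a1 * q + i) (had : a ≤ d) : a + a1 ≤ 2 * a1 * q + i := by
  match q with
  | 0 =>
    have h1 : a1 * 0 = 0 := by ring
    have h2 : 2 * a1 * 0 = 0 := by ring
    omega
  | 1 =>
    have h1 : a1 * 1 = a1 := by ring
    have h2 : 2 * a1 * 1 = 2 * a1 := by ring
    omega
  | (k+2) =>
    have h1 : a1 * (k + 2) = a1 * k + 2 * a1 := by ring
    have h2 : 2 * a1 * (k + 2) = 2 * (a1 * k) + 4 * a1 := by ring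
    omega

lemma move_room (a1 n d a : ℕ) (h : 0 < a1) (ha : a1 ≤ a) (han : a ≤ n) (had : a ≤ d)
    (hd : d < gI a1 n) : a + a1 ≤ n := by
  rw [gI_closed] at hd
  have hmod := Nat.div_add_mod n (2 * a1)
  have := move_room_arith a1 a d (n / (2 * a1)) (n % (2 * a1)) hd ha (by omega) had
  omega


/-- With `a1 = min A`: if `d < gI n` and `⌊d/a1⌋ ≤ ⌊e/a1⌋`,
the opponent wins NIM with cash. -/
theorem nimWC_poor_II (A : Finset ℕ) (hA : A.Nonempty) (hpos : ∀ a ∈ A, 0 < a)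
    (a1 : ℕ) (ha1 : a1 = A.min' hA) (n d e : ℕ)
    (hd : d < gI a1 n) (hde : d / a1 ≤ e / a1) :
    nimWC A n d e = false := by
  have ha1A : a1 ∈ A := ha1 ▸ A.min'_mem hA
  have ha1pos : 0 < a1 := hpos a1 ha1A
  have ha1min : ∀ a ∈ A, a1 ≤ a := by
    intro a haA; rw [ha1]; exact A.min'_le a haA
  clear ha1
  induction n using Nat.strong_induction_on generalizing d e with
  | _ n IH =>
  rw [nimWC_false_iff]
  intro a haA ha0 han had
  -- player I moved a; we show the resulting position is a win for II
  have ha1a : a1 ≤ a := ha1min a haA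
  have hroom : a + a1 ≤ n := move_room a1 n d a ha1pos ha1a han had hd
  -- money facts
  have hd1 : 1 ≤ d / a1 := (Nat.one_le_div_iff ha1pos).mpr (le_trans ha1a had)
  have he1 : a1 ≤ e := (Nat.one_le_div_iff ha1pos).mp (le_trans hd1 hde)
  -- II responds with a1
  apply nimWC_true_of A (n - a) e (d - a) a1 ha1A ha1pos (by omega) he1
  -- the position (n - a - a1; d - a, e - a1) is again a loss for the mover
  apply IH (n - a - a1) (by omega) (d - a) (e - a1)
  · -- d - a < gI a1 (n - a - a1)
    have hkey : gI a1 ((n - a - a1) + a + a1) ≤ gI a1 (n - a - a1) + a :=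
      gI_key_s11 a1 (n - a - a1) a ha1pos ha1a
    have hn' : (n - a - a1) + a + a1 = n := by omega
    rw [hn'] at hkey
    omega
  · -- (d - a) / a1 ≤ (e - a1) / a1
    have he2 : (e - a1) / a1 + 1 = e / a1 := by
      conv_rhs => rw [show e = (e - a1) + a1 by omega]
      rw [Nat.add_div_right _ ha1pos]
    have hd2 : (d - a1) / a1 + 1 = d / a1 := by
      conv_rhs => rw [show d = (d - a1) + a1 by omega, Nat.add_div_right _ ha1pos]
    have hd3 : (d - a) / a1 ≤ (d - a1) / a1 :=
      Nat.div_le_div_right (by omega)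
    omega
end

section
/- Let A be a finite nonempty set of positive integers with a1 = min A. For all n, d, e ∈ ℕ: (1) if e < gII(n) and d ≥ gI(n), then ⌊d/a1⌋ > ⌊e/a1⌋; (2) if d < gI(n) and e ≥ gII(n), then ⌊d/a1⌋ ≤ ⌊e/a1⌋. -/
/-- With `a1 = min A`:
(1) if `e < gII n` and `d ≥ gI n` then `⌊d/a1⌋ > ⌊e/a1⌋`;
(2) if `d < gI n` and `e ≥ gII n` then `⌊d/a1⌋ ≤ ⌊e/a1⌋`. -/
theorem g_div_compare (A : Finset ℕ) (hA : A.Nonempty) (hpos : ∀ a ∈ A, 0 < a)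
    (a1 : ℕ) (ha1 : a1 = A.min' hA) (n d e : ℕ) :
    (e < gII a1 n → gI a1 n ≤ d → e / a1 < d / a1) ∧
      (d < gI a1 n → gII a1 n ≤ e → d / a1 ≤ e / a1) := by
  have ha1pos : 0 < a1 := ha1 ▸ hpos _ (A.min'_mem hA)
  have hilt : n % (2 * a1) < 2 * a1 := Nat.mod_lt _ (by omega)
  have hdm := Nat.div_add_mod n (2 * a1)
  rw [mul_assoc] at hdm
  set q := n / (2 * a1) with hqdef
  generalize hM : a1 * q = m at hdm
  have hhalf : (n - n % (2 * a1)) / 2 = m := by omega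
  have hgI : gI a1 n = m + min (n % (2 * a1) + 1) a1 := by rw [gI, hhalf]
  have hgII : gII a1 n = m + (n % (2 * a1) + 1 - a1) := by rw [gII, hhalf]
  constructor
  · intro he hd
    rw [hgII] at he
    rw [hgI] at hd
    rcases lt_or_ge (n % (2 * a1)) a1 with hc | hc
    · have h1 : e / a1 < q := by
        rw [Nat.div_lt_iff_lt_mul ha1pos, mul_comm q a1, hM]; omega
      have h2 : q ≤ d / a1 := by
        rw [Nat.le_div_iff_mul_le ha1pos, mul_comm q a1, hM]; omega
      omega
    · have h1 : e / a1 < q + 1 := by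
        rw [Nat.div_lt_iff_lt_mul ha1pos, add_mul, one_mul, mul_comm q a1, hM]; omega
      have h2 : q + 1 ≤ d / a1 := by
        rw [Nat.le_div_iff_mul_le ha1pos, add_mul, one_mul, mul_comm q a1, hM]; omega
      omega
  · intro hd he
    rw [hgI] at hd
    rw [hgII] at he
    have h1 : d / a1 < q + 1 := by
      rw [Nat.div_lt_iff_lt_mul ha1pos, add_mul, one_mul, mul_comm q a1, hM]; omega
    have h2 : q ≤ e / a1 := by
      rw [Nat.le_div_iff_mul_le ha1pos, mul_comm q a1, hM]; omega
    omega
end
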